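/- (Row exclusion for Koszul matrix factorizations.) Let R = ℚ[x₁,...,x_n], R_y = R[y], and let a = (a₁,...,a_k), b = (b₁,...,b_k) be sequences in R_y such that the Koszul matrix factorization K(a; b) over R_y has potential ω = Σ aᵢbᵢ ∈ R. Suppose bᵢ = c·yᵐ + p for some index i, with c ∈ ℚ nonzero and deg_y(p) < m. Then, in the homotopy category of matrix factorizations over R with potential ω, K(a; b)_{R_y} is isomorphic to K(ǎ; b̌)_{R_y/⟨bᵢ⟩}, where ǎ, b̌ are the sequences with the i-th entries removed. -/

import Mathlib

open Polynomial

set_option maxHeartbeats 2000000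
set_option synthInstance.maxHeartbeats 1000000

/-- Ranks of the two components of the Koszul matrix factorization associated to a list
of pairs of ring elements: the empty list gives the unit factorization `(A, 0)`, and
each additional factor `(aᵢ, bᵢ)` tensors (by `⊠`) with `(A →aᵢ→ A →bᵢ→ A)`. -/
def kRank {α : Type*} : List α → ℕ × ℕ
  | [] => (1, 0)
  | _ :: l => ((kRank l).1 + (kRank l).2, (kRank l).1 + (kRank l).2)

/-- Splitting a free module `A^{s+t}` as `A^s × A^t`. -/
noncomputable def fsplit (A : Type*) [CommRing A] (s t : ℕ) :
    (Fin (s + t) → A) ≃ₗ[A] (Fin s → A) × (Fin t → A) :=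
  (LinearEquiv.funCongrLeft A A finSumFinEquiv).trans
    (LinearEquiv.sumArrowLequivProdArrow (Fin s) (Fin t) A A)

mutual
/-- The degree-0 differential of the Koszul matrix factorization `K(a;b)` of a list of
pairs `(aᵢ, bᵢ)`, built recursively by the tensor product `⊠` of matrix
factorizations: `d₀(x, y) = (a·x - d₁'y, d₀'x + b·y)`. -/
noncomputable def KD0 {A : Type*} [CommRing A] :
    (l : List (A × A)) → ((Fin (kRank l).1 → A) →ₗ[A] (Fin (kRank l).2 → A))
  | [] => 0
  | q :: l =>
    (fsplit A (kRank l).1 (kRank l).2).symm.toLinearMap ∘ₗ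
      (LinearMap.prod
        (q.1 • LinearMap.fst A _ _ - KD1 l ∘ₗ LinearMap.snd A _ _)
        (KD0 l ∘ₗ LinearMap.fst A _ _ + q.2 • LinearMap.snd A _ _)) ∘ₗ
      (fsplit A (kRank l).1 (kRank l).2).toLinearMap

/-- The degree-1 differential of the Koszul matrix factorization `K(a;b)`:
`d₁(u, v) = (b·u + d₁'v, -d₀'u + a·v)`. -/
noncomputable def KD1 {A : Type*} [CommRing A] :
    (l : List (A × A)) → ((Fin (kRank l).2 → A) →ₗ[A] (Fin (kRank l).1 → A))
  | [] => 0
  | q :: l =>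
    (fsplit A (kRank l).1 (kRank l).2).symm.toLinearMap ∘ₗ
      (LinearMap.prod
        (q.2 • LinearMap.fst A _ _ + KD1 l ∘ₗ LinearMap.snd A _ _)
        (q.1 • LinearMap.snd A _ _ - KD0 l ∘ₗ LinearMap.fst A _ _)) ∘ₗ
      (fsplit A (kRank l).1 (kRank l).2).toLinearMap
end

lemma kRank_map {α β : Type*} (g : α → β) (l : List α) : kRank (l.map g) = kRank l := by
  induction l with
  | nil => rfl
  | cons q l ih => simp [kRank, List.map, ih]

section FS
variable {A B : Type*} [CommRing A] [CommRing B]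

lemma KD0_cons (q : A × A) (l : List (A × A)) (x : Fin (kRank (q :: l)).1 → A) :
    KD0 (q :: l) x = (fsplit A (kRank l).1 (kRank l).2).symm
      (q.1 • (fsplit A (kRank l).1 (kRank l).2 x).1
          - KD1 l (fsplit A (kRank l).1 (kRank l).2 x).2,
       KD0 l (fsplit A (kRank l).1 (kRank l).2 x).1
          + q.2 • (fsplit A (kRank l).1 (kRank l).2 x).2) := by
  rfl

lemma KD1_cons (q : A × A) (l : List (A × A)) (x : Fin (kRank (q :: l)).2 → A) :
    KD1 (q :: l) x = (fsplit A (kRank l).1 (kRank l).2).symm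
      (q.2 • (fsplit A (kRank l).1 (kRank l).2 x).1
          + KD1 l (fsplit A (kRank l).1 (kRank l).2 x).2,
       q.1 • (fsplit A (kRank l).1 (kRank l).2 x).2
          - KD0 l (fsplit A (kRank l).1 (kRank l).2 x).1) := by
  rfl

lemma fsplit_map_cast (φ : A →+* B) {s t s' t' : ℕ} (hs : s' = s) (ht : t' = t)
    (h : s' + t' = s + t) (x : Fin (s + t) → A) :
    fsplit B s' t' (fun i => φ (x (Fin.cast h i)))
      = (fun i => φ ((fsplit A s t x).1 (Fin.cast hs i)),
         fun j => φ ((fsplit A s t x).2 (Fin.cast ht j))) := by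
  subst hs; subst ht
  rfl

lemma fsplit_symm_map_cast (φ : A →+* B) {s t s' t' : ℕ} (hs : s' = s) (ht : t' = t)
    (h : s' + t' = s + t) (u : Fin s → A) (v : Fin t → A) :
    (fsplit B s' t').symm (fun i => φ (u (Fin.cast hs i)), fun j => φ (v (Fin.cast ht j)))
      = fun k => φ ((fsplit A s t).symm (u, v) (Fin.cast h k)) := by
  subst hs; subst ht
  funext k
  obtain ⟨y, rfl⟩ := finSumFinEquiv.surjective k
  have hc : Fin.cast h (finSumFinEquiv y) = finSumFinEquiv y := rfl
  rw [hc]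
  cases y <;>
    simp [fsplit, LinearEquiv.sumArrowLequivProdArrow, Equiv.sumArrowEquivProdArrow]
end FS

section BC
variable {A B : Type*} [CommRing A] [CommRing B]

lemma KD_map (φ : A →+* B) (l : List (A × A)) :
    (∀ x : Fin (kRank l).1 → A,
      KD0 (l.map (Prod.map φ φ))
        (fun i => φ (x (Fin.cast (congrArg Prod.fst (kRank_map _ l)) i)))
        = fun j => φ (KD0 l x (Fin.cast (congrArg Prod.snd (kRank_map _ l)) j))) ∧
    (∀ y : Fin (kRank l).2 → A,
      KD1 (l.map (Prod.map φ φ))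
        (fun i => φ (y (Fin.cast (congrArg Prod.snd (kRank_map _ l)) i)))
        = fun j => φ (KD1 l y (Fin.cast (congrArg Prod.fst (kRank_map _ l)) j))) := by
  induction l with
  | nil =>
      constructor <;> intro x <;> funext j <;>
        simp [KD0, KD1, List.map]
  | cons q l ih =>
      obtain ⟨ih0, ih1⟩ := ih
      have h1 : (kRank (l.map (Prod.map φ φ))).1 = (kRank l).1 :=
        congrArg Prod.fst (kRank_map _ l)
      have h2 : (kRank (l.map (Prod.map φ φ))).2 = (kRank l).2 :=
        congrArg Prod.snd (kRank_map _ l)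
      have h12 : (kRank (l.map (Prod.map φ φ))).1 + (kRank (l.map (Prod.map φ φ))).2
          = (kRank l).1 + (kRank l).2 := by rw [h1, h2]
      have ih0' : ∀ x : Fin (kRank l).1 → A,
          KD0 (l.map (Prod.map φ φ)) (fun i => φ (x (Fin.cast h1 i)))
            = fun j => φ (KD0 l x (Fin.cast h2 j)) := ih0
      have ih1' : ∀ y : Fin (kRank l).2 → A,
          KD1 (l.map (Prod.map φ φ)) (fun i => φ (y (Fin.cast h2 i)))
            = fun j => φ (KD1 l y (Fin.cast h1 j)) := ih1
      constructor
      · intro x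
        have key : KD0 (Prod.map φ φ q :: l.map (Prod.map φ φ))
              (fun i : Fin ((kRank (l.map (Prod.map φ φ))).1 + (kRank (l.map (Prod.map φ φ))).2)
                => φ (x (Fin.cast h12 i)))
            = fun j : Fin ((kRank (l.map (Prod.map φ φ))).1 + (kRank (l.map (Prod.map φ φ))).2)
                => φ (KD0 (q :: l) x (Fin.cast h12 j)) := by
          erw [KD0_cons, KD0_cons, fsplit_map_cast φ h1 h2 h12 x]
          set X1 := (fsplit A (kRank l).1 (kRank l).2 x).1 with hX1
          set X2 := (fsplit A (kRank l).1 (kRank l).2 x).2 with hX2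
          have e1 : (Prod.map φ φ q).1 • (fun i => φ (X1 (Fin.cast h1 i)))
                - KD1 (l.map (Prod.map φ φ)) (fun j => φ (X2 (Fin.cast h2 j)))
              = fun i => φ ((q.1 • X1 - KD1 l X2) (Fin.cast h1 i)) := by
            rw [ih1' X2]; funext i; simp [Prod.map, map_mul]
          have e2 : KD0 (l.map (Prod.map φ φ)) (fun i => φ (X1 (Fin.cast h1 i)))
                + (Prod.map φ φ q).2 • (fun j => φ (X2 (Fin.cast h2 j)))
              = fun j => φ ((KD0 l X1 + q.2 • X2) (Fin.cast h2 j)) := by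
            rw [ih0' X1]; funext j; simp [Prod.map, map_mul]
          rw [e1, e2]
          exact fsplit_symm_map_cast φ h1 h2 h12 _ _
        exact key
      · intro y
        have key : KD1 (Prod.map φ φ q :: l.map (Prod.map φ φ))
              (fun i : Fin ((kRank (l.map (Prod.map φ φ))).1 + (kRank (l.map (Prod.map φ φ))).2)
                => φ (y (Fin.cast h12 i)))
            = fun j : Fin ((kRank (l.map (Prod.map φ φ))).1 + (kRank (l.map (Prod.map φ φ))).2)
                => φ (KD1 (q :: l) y (Fin.cast h12 j)) := by
          erw [KD1_cons, KD1_cons, fsplit_map_cast φ h1 h2 h12 y]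
          set X1 := (fsplit A (kRank l).1 (kRank l).2 y).1 with hX1
          set X2 := (fsplit A (kRank l).1 (kRank l).2 y).2 with hX2
          have e1 : (Prod.map φ φ q).2 • (fun i => φ (X1 (Fin.cast h1 i)))
                + KD1 (l.map (Prod.map φ φ)) (fun j => φ (X2 (Fin.cast h2 j)))
              = fun i => φ ((q.2 • X1 + KD1 l X2) (Fin.cast h1 i)) := by
            rw [ih1' X2]; funext i; simp [Prod.map, map_mul]
          have e2 : (Prod.map φ φ q).1 • (fun j => φ (X2 (Fin.cast h2 j)))
                - KD0 (l.map (Prod.map φ φ)) (fun i => φ (X1 (Fin.cast h1 i)))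
              = fun j => φ ((q.1 • X2 - KD0 l X1) (Fin.cast h2 j)) := by
            rw [ih0' X1]; funext j; simp [Prod.map, map_mul]
          rw [e1, e2]
          exact fsplit_symm_map_cast φ h1 h2 h12 _ _
        exact key
end BC

section POT
variable {A : Type*} [CommRing A]

lemma KD_pot (l : List (A × A)) :
    (∀ x, KD1 l (KD0 l x) = ((l.map fun q => q.1 * q.2).sum) • x) ∧
    (∀ y, KD0 l (KD1 l y) = ((l.map fun q => q.1 * q.2).sum) • y) := by
  induction l with
  | nil =>
      constructor <;> intro x <;> simp [KD0, KD1]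
  | cons q l ih =>
      obtain ⟨ih0, ih1⟩ := ih
      have hsum : ((q :: l).map fun p => p.1 * p.2).sum
          = q.1 * q.2 + (l.map fun p => p.1 * p.2).sum := by simp
      set S := (l.map fun p => p.1 * p.2).sum with hS
      constructor
      · intro x
        erw [KD0_cons, KD1_cons, LinearEquiv.apply_symm_apply]
        have : ((q.1 • (fsplit A (kRank l).1 (kRank l).2 x).1
              - KD1 l (fsplit A (kRank l).1 (kRank l).2 x).2,
             KD0 l (fsplit A (kRank l).1 (kRank l).2 x).1
              + q.2 • (fsplit A (kRank l).1 (kRank l).2 x).2) :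
              (Fin (kRank l).1 → A) × (Fin (kRank l).2 → A)) = (by exact
            (q.1 • (fsplit A (kRank l).1 (kRank l).2 x).1
              - KD1 l (fsplit A (kRank l).1 (kRank l).2 x).2,
             KD0 l (fsplit A (kRank l).1 (kRank l).2 x).1
              + q.2 • (fsplit A (kRank l).1 (kRank l).2 x).2)) := rfl
        set X1 := (fsplit A (kRank l).1 (kRank l).2 x).1 with hX1
        set X2 := (fsplit A (kRank l).1 (kRank l).2 x).2 with hX2
        have c1 : q.2 • (q.1 • X1 - KD1 l X2) + KD1 l (KD0 l X1 + q.2 • X2)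
            = (q.1 * q.2 + S) • X1 := by
          rw [map_add, map_smul, ih0, smul_sub, add_smul, smul_smul, mul_comm q.2 q.1]
          abel
        have c2 : q.1 • (KD0 l X1 + q.2 • X2) - KD0 l (q.1 • X1 - KD1 l X2)
            = (q.1 * q.2 + S) • X2 := by
          rw [map_sub, map_smul, ih1, smul_add, add_smul, smul_smul]
          abel
        rw [c1, c2, hsum]
        have : ((q.1 * q.2 + S) • X1, (q.1 * q.2 + S) • X2)
            = fsplit A (kRank l).1 (kRank l).2 ((q.1 * q.2 + S) • x) := by
          erw [map_smul]; rfl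
        erw [this, LinearEquiv.symm_apply_apply]
      · intro y
        erw [KD1_cons, KD0_cons, LinearEquiv.apply_symm_apply]
        set X1 := (fsplit A (kRank l).1 (kRank l).2 y).1 with hX1
        set X2 := (fsplit A (kRank l).1 (kRank l).2 y).2 with hX2
        have c1 : q.1 • (q.2 • X1 + KD1 l X2) - KD1 l (q.1 • X2 - KD0 l X1)
            = (q.1 * q.2 + S) • X1 := by
          rw [map_sub, map_smul, ih0, smul_add, add_smul, smul_smul]
          abel
        have c2 : KD0 l (q.2 • X1 + KD1 l X2) + q.2 • (q.1 • X2 - KD0 l X1)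
            = (q.1 * q.2 + S) • X2 := by
          rw [map_add, map_smul, ih1, smul_sub, add_smul, smul_smul, mul_comm q.2 q.1]
          abel
        rw [c1, c2, hsum]
        have : ((q.1 * q.2 + S) • X1, (q.1 * q.2 + S) • X2)
            = fsplit A (kRank l).1 (kRank l).2 ((q.1 * q.2 + S) • y) := by
          erw [map_smul]; rfl
        erw [this, LinearEquiv.symm_apply_apply]
end POT

section Abstract
variable {R M0 M1 N0 N1 : Type*} [CommRing R]
  [AddCommGroup M0] [AddCommGroup M1] [AddCommGroup N0] [AddCommGroup N1]
  [Module R M0] [Module R M1] [Module R N0] [Module R N1]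

/-- Abstract homotopy-transfer: a chain map of matrix factorizations admitting a
section, and whose kernel carries a contraction, is a homotopy equivalence. -/
theorem abstract_exclusion (ω : R)
    (D0 : M0 →ₗ[R] M1) (D1 : M1 →ₗ[R] M0) (d0 : N0 →ₗ[R] N1) (d1 : N1 →ₗ[R] N0)
    (f0 : M0 →ₗ[R] N0) (f1 : M1 →ₗ[R] N1) (σ0 : N0 →ₗ[R] M0) (σ1 : N1 →ₗ[R] M1)
    (H0 : M0 →ₗ[R] M1) (H1 : M1 →ₗ[R] M0)
    (hDD0 : ∀ m, D1 (D0 m) = ω • m) (hDD1 : ∀ m, D0 (D1 m) = ω • m)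
    (hdd0 : ∀ w, d1 (d0 w) = ω • w) (hdd1 : ∀ z, d0 (d1 z) = ω • z)
    (hf0 : ∀ m, f1 (D0 m) = d0 (f0 m)) (hf1 : ∀ m, f0 (D1 m) = d1 (f1 m))
    (hfσ0 : ∀ w, f0 (σ0 w) = w) (hfσ1 : ∀ z, f1 (σ1 z) = z)
    (hfH0 : ∀ m, f1 (H0 m) = 0) (hfH1 : ∀ m, f0 (H1 m) = 0)
    (hK0 : ∀ m, f0 m = 0 → D1 (H0 m) + H1 (D0 m) = m)
    (hK1 : ∀ m, f1 m = 0 → H0 (D1 m) + D0 (H1 m) = m) :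
    ∃ (g0 : N0 →ₗ[R] M0) (g1 : N1 →ₗ[R] M1) (h0 : M0 →ₗ[R] M1) (h1 : M1 →ₗ[R] M0),
      (∀ w, D0 (g0 w) = g1 (d0 w)) ∧
      (∀ z, D1 (g1 z) = g0 (d1 z)) ∧
      (∀ m, g0 (f0 m) - m = h1 (D0 m) + D1 (h0 m)) ∧
      (∀ m, g1 (f1 m) - m = h0 (D1 m) + D0 (h1 m)) ∧
      (∀ w, f0 (g0 w) = w) ∧
      (∀ z, f1 (g1 z) = z) := by
  refine ⟨σ0 - H1 ∘ₗ (D0 ∘ₗ σ0 - σ1 ∘ₗ d0), σ1 - H0 ∘ₗ (D1 ∘ₗ σ1 - σ0 ∘ₗ d1),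
    -(H0 ∘ₗ (LinearMap.id - σ0 ∘ₗ f0)), -(H1 ∘ₗ (LinearMap.id - σ1 ∘ₗ f1)),
    ?_, ?_, ?_, ?_, ?_, ?_⟩
  · intro w
    have ht : f1 (D0 (σ0 w) - σ1 (d0 w)) = 0 := by
      rw [map_sub, hf0, hfσ0, hfσ1, sub_self]
    have hc := hK1 _ ht
    simp only [LinearMap.sub_apply, LinearMap.comp_apply, map_sub, map_add, map_neg,
      hdd0, hDD0, map_smul] at hc ⊢
    linear_combination (norm := module) -hc
  · intro z
    have ht : f0 (D1 (σ1 z) - σ0 (d1 z)) = 0 := by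
      rw [map_sub, hf1, hfσ1, hfσ0, sub_self]
    have hc := hK0 _ ht
    simp only [LinearMap.sub_apply, LinearMap.comp_apply, map_sub, map_add, map_neg,
      hdd1, hDD1, map_smul] at hc ⊢
    linear_combination (norm := module) -hc
  · intro m
    have hp : f0 (m - σ0 (f0 m)) = 0 := by rw [map_sub, hfσ0, sub_self]
    have hc := hK0 _ hp
    simp only [LinearMap.sub_apply, LinearMap.comp_apply, LinearMap.neg_apply,
      LinearMap.id_apply, map_sub, map_add, map_neg, hf0, map_smul] at hc ⊢
    linear_combination (norm := module) hc
  · intro m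
    have hp : f1 (m - σ1 (f1 m)) = 0 := by rw [map_sub, hfσ1, sub_self]
    have hc := hK1 _ hp
    simp only [LinearMap.sub_apply, LinearMap.comp_apply, LinearMap.neg_apply,
      LinearMap.id_apply, map_sub, map_add, map_neg, hf1, map_smul] at hc ⊢
    linear_combination (norm := module) hc
  · intro w
    simp only [LinearMap.sub_apply, LinearMap.comp_apply, map_sub, hfσ0, hfH1, sub_zero]
  · intro z
    simp only [LinearMap.sub_apply, LinearMap.comp_apply, map_sub, hfσ1, hfH0, sub_zero]
end Abstract

section Data
variable (R A Q : Type*) [CommRing R] [CommRing A] [CommRing Q]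
  [Algebra R A] [Algebra R Q] [Algebra A Q] [IsScalarTower R A Q]

/-- The data of a homotopy equivalence (chain map with section and kernel contraction)
between the Koszul factorization of `l` over `A` and that of `l'` over `Q`,
as modules over the base ring `R`. -/
structure ExclData (l : List (A × A)) (l' : List (Q × Q)) : Type _ where
  f0 : (Fin (kRank l).1 → A) →ₗ[R] (Fin (kRank l').1 → Q)
  f1 : (Fin (kRank l).2 → A) →ₗ[R] (Fin (kRank l').2 → Q)
  σ0 : (Fin (kRank l').1 → Q) →ₗ[R] (Fin (kRank l).1 → A)
  σ1 : (Fin (kRank l').2 → Q) →ₗ[R] (Fin (kRank l).2 → A)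
  H0 : (Fin (kRank l).1 → A) →ₗ[R] (Fin (kRank l).2 → A)
  H1 : (Fin (kRank l).2 → A) →ₗ[R] (Fin (kRank l).1 → A)
  hsemi0 : ∀ (a : A) x, f0 (a • x) = algebraMap A Q a • f0 x
  hsemi1 : ∀ (a : A) x, f1 (a • x) = algebraMap A Q a • f1 x
  hchain0 : ∀ x, f1 (KD0 l x) = KD0 l' (f0 x)
  hchain1 : ∀ x, f0 (KD1 l x) = KD1 l' (f1 x)
  hsec0 : ∀ w, f0 (σ0 w) = w
  hsec1 : ∀ z, f1 (σ1 z) = z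
  hfH0 : ∀ x, f1 (H0 x) = 0
  hfH1 : ∀ x, f0 (H1 x) = 0
  hcontr0 : ∀ x, f0 x = 0 → KD1 l (H0 x) + H1 (KD0 l x) = x
  hcontr1 : ∀ x, f1 x = 0 → H0 (KD1 l x) + KD0 l (H1 x) = x
  hHsmul0 : ∀ (a : A) x, f0 x = 0 → H0 (a • x) = a • H0 x
  hHsmul1 : ∀ (a : A) x, f1 x = 0 → H1 (a • x) = a • H1 x
end Data

section Cons
variable {R A Q : Type*} [CommRing R] [CommRing A] [CommRing Q]
  [Algebra R A] [Algebra R Q] [Algebra A Q] [IsScalarTower R A Q]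

private noncomputable abbrev eA (A : Type*) [CommRing A] (l : List (A × A)) :
    (Fin ((kRank l).1 + (kRank l).2) → A) ≃ₗ[A]
      (Fin (kRank l).1 → A) × (Fin (kRank l).2 → A) :=
  fsplit A (kRank l).1 (kRank l).2

variable (R) in
private noncomputable def cF {l : List (A × A)} {l' : List (Q × Q)}
    (f0 : (Fin (kRank l).1 → A) →ₗ[R] (Fin (kRank l').1 → Q))
    (f1 : (Fin (kRank l).2 → A) →ₗ[R] (Fin (kRank l').2 → Q)) :
    (Fin ((kRank l).1 + (kRank l).2) → A) →ₗ[R] (Fin ((kRank l').1 + (kRank l').2) → Q) :=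
  (((eA Q l').symm.toLinearMap.restrictScalars R) ∘ₗ (f0.prodMap f1)) ∘ₗ
    ((eA A l).toLinearMap.restrictScalars R)

private lemma cF_apply {l : List (A × A)} {l' : List (Q × Q)}
    (f0 : (Fin (kRank l).1 → A) →ₗ[R] (Fin (kRank l').1 → Q))
    (f1 : (Fin (kRank l).2 → A) →ₗ[R] (Fin (kRank l').2 → Q)) (x) :
    cF R f0 f1 x = (eA Q l').symm (f0 ((eA A l) x).1, f1 ((eA A l) x).2) := rfl

variable (R) in
private noncomputable def cH {l : List (A × A)}
    (G0 : (Fin (kRank l).1 → A) →ₗ[R] (Fin (kRank l).2 → A))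
    (G1 : (Fin (kRank l).2 → A) →ₗ[R] (Fin (kRank l).1 → A)) :
    (Fin ((kRank l).1 + (kRank l).2) → A) →ₗ[R] (Fin ((kRank l).1 + (kRank l).2) → A) :=
  (((eA A l).symm.toLinearMap.restrictScalars R) ∘ₗ
    (LinearMap.prod (G1 ∘ₗ LinearMap.snd R _ _) (G0 ∘ₗ LinearMap.fst R _ _))) ∘ₗ
    ((eA A l).toLinearMap.restrictScalars R)

private lemma cH_apply {l : List (A × A)}
    (G0 : (Fin (kRank l).1 → A) →ₗ[R] (Fin (kRank l).2 → A))
    (G1 : (Fin (kRank l).2 → A) →ₗ[R] (Fin (kRank l).1 → A)) (x) :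
    cH R G0 G1 x = (eA A l).symm (G1 ((eA A l) x).2, G0 ((eA A l) x).1) := rfl

variable (R) in
private noncomputable def cG {l : List (A × A)} {l' : List (Q × Q)}
    (s0 : (Fin (kRank l').1 → Q) →ₗ[R] (Fin (kRank l).1 → A))
    (s1 : (Fin (kRank l').2 → Q) →ₗ[R] (Fin (kRank l).2 → A)) :
    (Fin ((kRank l').1 + (kRank l').2) → Q) →ₗ[R] (Fin ((kRank l).1 + (kRank l).2) → A) :=
  (((eA A l).symm.toLinearMap.restrictScalars R) ∘ₗ (s0.prodMap s1)) ∘ₗ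
    ((eA Q l').toLinearMap.restrictScalars R)

private lemma cG_apply {l : List (A × A)} {l' : List (Q × Q)}
    (s0 : (Fin (kRank l').1 → Q) →ₗ[R] (Fin (kRank l).1 → A))
    (s1 : (Fin (kRank l').2 → Q) →ₗ[R] (Fin (kRank l).2 → A)) (w) :
    cG R s0 s1 w = (eA A l).symm (s0 ((eA Q l') w).1, s1 ((eA Q l') w).2) := rfl

private noncomputable def KD0c (q : A × A) (l : List (A × A)) :
    (Fin ((kRank l).1 + (kRank l).2) → A) →ₗ[A] (Fin ((kRank l).1 + (kRank l).2) → A) :=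
  KD0 (q :: l)

private noncomputable def KD1c (q : A × A) (l : List (A × A)) :
    (Fin ((kRank l).1 + (kRank l).2) → A) →ₗ[A] (Fin ((kRank l).1 + (kRank l).2) → A) :=
  KD1 (q :: l)

private lemma KD0c_cons (q : A × A) (l : List (A × A)) (x) :
    KD0c q l x = (eA A l).symm
      (q.1 • ((eA A l) x).1 - KD1 l ((eA A l) x).2,
       KD0 l ((eA A l) x).1 + q.2 • ((eA A l) x).2) :=
  KD0_cons q l x

private lemma KD1c_cons (q : A × A) (l : List (A × A)) (x) :
    KD1c q l x = (eA A l).symm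
      (q.2 • ((eA A l) x).1 + KD1 l ((eA A l) x).2,
       q.1 • ((eA A l) x).2 - KD0 l ((eA A l) x).1) :=
  KD1_cons q l x

variable {l : List (A × A)} {l' : List (Q × Q)} (d : ExclData R A Q l l') (q : A × A)

private lemma cons_semi0 : ∀ (a : A) (x : Fin ((kRank l).1 + (kRank l).2) → A),
    cF R d.f0 d.f1 (a • x) = algebraMap A Q a • cF R d.f0 d.f1 x := by
  intro a x
  rw [cF_apply, cF_apply, map_smul, Prod.smul_fst, Prod.smul_snd, d.hsemi0, d.hsemi1,
    ← map_smul ((eA Q l').symm) (algebraMap A Q a)]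
  rfl

private lemma cons_chain0 : ∀ x : Fin ((kRank l).1 + (kRank l).2) → A,
    cF R d.f0 d.f1 (KD0 (q :: l) x)
      = KD0 ((algebraMap A Q q.1, algebraMap A Q q.2) :: l') (cF R d.f0 d.f1 x) := by
  intro x
  erw [KD0_cons, KD0_cons (algebraMap A Q q.1, algebraMap A Q q.2) l', cF_apply, cF_apply, LinearEquiv.apply_symm_apply,
    LinearEquiv.apply_symm_apply]
  refine congrArg _ (Prod.ext ?_ ?_)
  · show d.f0 (q.1 • ((eA A l) x).1 - KD1 l ((eA A l) x).2)
      = algebraMap A Q q.1 • d.f0 ((eA A l) x).1 - KD1 l' (d.f1 ((eA A l) x).2)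
    rw [map_sub, d.hsemi0, d.hchain1]
  · show d.f1 (KD0 l ((eA A l) x).1 + q.2 • ((eA A l) x).2)
      = KD0 l' (d.f0 ((eA A l) x).1) + algebraMap A Q q.2 • d.f1 ((eA A l) x).2
    rw [map_add, d.hsemi1, d.hchain0]

private lemma cons_chain1 : ∀ x : Fin ((kRank l).1 + (kRank l).2) → A,
    cF R d.f0 d.f1 (KD1 (q :: l) x)
      = KD1 ((algebraMap A Q q.1, algebraMap A Q q.2) :: l') (cF R d.f0 d.f1 x) := by
  intro x
  erw [KD1_cons, KD1_cons (algebraMap A Q q.1, algebraMap A Q q.2) l', cF_apply, cF_apply, LinearEquiv.apply_symm_apply,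
    LinearEquiv.apply_symm_apply]
  refine congrArg _ (Prod.ext ?_ ?_)
  · show d.f0 (q.2 • ((eA A l) x).1 + KD1 l ((eA A l) x).2)
      = algebraMap A Q q.2 • d.f0 ((eA A l) x).1 + KD1 l' (d.f1 ((eA A l) x).2)
    rw [map_add, d.hsemi0, d.hchain1]
  · show d.f1 (q.1 • ((eA A l) x).2 - KD0 l ((eA A l) x).1)
      = algebraMap A Q q.1 • d.f1 ((eA A l) x).2 - KD0 l' (d.f0 ((eA A l) x).1)
    rw [map_sub, d.hsemi1, d.hchain0]

private lemma cons_sec0 : ∀ w : Fin ((kRank l').1 + (kRank l').2) → Q,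
    cF R d.f0 d.f1 (cG R d.σ0 d.σ1 w) = w := by
  intro w
  rw [cG_apply, cF_apply, LinearEquiv.apply_symm_apply, d.hsec0, d.hsec1,
    Prod.mk.eta, LinearEquiv.symm_apply_apply]

private lemma cons_fH0 : ∀ x : Fin ((kRank l).1 + (kRank l).2) → A,
    cF R d.f0 d.f1 (cH R d.H0 (-d.H1) x) = 0 := by
  intro x
  rw [cH_apply, cF_apply, LinearEquiv.apply_symm_apply]
  have e1 : d.f0 ((-d.H1) (((eA A l) x)).2) = 0 := by
    rw [LinearMap.neg_apply, map_neg, d.hfH1, neg_zero]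
  have e2 : d.f1 (d.H0 (((eA A l) x)).1) = 0 := d.hfH0 _
  rw [e1, e2]
  exact map_zero _

private lemma cons_fH1 : ∀ x : Fin ((kRank l).1 + (kRank l).2) → A,
    cF R d.f0 d.f1 (cH R (-d.H0) d.H1 x) = 0 := by
  intro x
  rw [cH_apply, cF_apply, LinearEquiv.apply_symm_apply]
  have e1 : d.f0 (d.H1 (((eA A l) x)).2) = 0 := d.hfH1 _
  have e2 : d.f1 ((-d.H0) (((eA A l) x)).1) = 0 := by
    rw [LinearMap.neg_apply, map_neg, d.hfH0, neg_zero]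
  rw [e1, e2]
  exact map_zero _

private lemma cons_ker (x : Fin ((kRank l).1 + (kRank l).2) → A)
    (hx : cF R d.f0 d.f1 x = 0) :
    d.f0 ((eA A l) x).1 = 0 ∧ d.f1 ((eA A l) x).2 = 0 := by
  rw [cF_apply] at hx
  have hx' : (d.f0 ((eA A l) x).1, d.f1 ((eA A l) x).2) = 0 := by
    have := congrArg (eA Q l') hx
    rwa [LinearEquiv.apply_symm_apply, map_zero] at this
  exact ⟨congrArg Prod.fst hx', congrArg Prod.snd hx'⟩

private lemma cons_contr0 : ∀ x, cF R d.f0 d.f1 x = 0 →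
    KD1c q l (cH R d.H0 (-d.H1) x)
      + cH R (-d.H0) d.H1 (KD0c q l x) = x := by
  intro x hx
  obtain ⟨h01, h02⟩ := cons_ker d x hx
  rw [KD1c_cons, KD0c_cons, cH_apply, cH_apply, LinearEquiv.apply_symm_apply,
    LinearEquiv.apply_symm_apply, ← map_add]
  conv_rhs => rw [← (eA A l).symm_apply_apply x]
  refine congrArg _ (Prod.ext ?_ ?_)
  · show q.2 • ((-d.H1) ((eA A l) x).2) + KD1 l (d.H0 ((eA A l) x).1)
        + d.H1 (KD0 l ((eA A l) x).1 + q.2 • ((eA A l) x).2) = ((eA A l) x).1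
    simp only [LinearMap.neg_apply, map_neg]
    rw [map_add, d.hHsmul1 q.2 _ h02]
    have hc := d.hcontr0 _ h01
    linear_combination (norm := module) hc
  · show q.1 • (d.H0 ((eA A l) x).1) - KD0 l ((-d.H1) ((eA A l) x).2)
        + (-d.H0) (q.1 • ((eA A l) x).1 - KD1 l ((eA A l) x).2) = ((eA A l) x).2
    simp only [LinearMap.neg_apply, map_neg]
    rw [map_sub, d.hHsmul0 q.1 _ h01]
    have hc := d.hcontr1 _ h02
    linear_combination (norm := module) hc

private lemma cons_contr1 : ∀ x, cF R d.f0 d.f1 x = 0 →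
    cH R d.H0 (-d.H1) (KD1c q l x)
      + KD0c q l (cH R (-d.H0) d.H1 x) = x := by
  intro x hx
  obtain ⟨h01, h02⟩ := cons_ker d x hx
  rw [KD1c_cons, KD0c_cons, cH_apply, cH_apply, LinearEquiv.apply_symm_apply,
    LinearEquiv.apply_symm_apply, ← map_add]
  conv_rhs => rw [← (eA A l).symm_apply_apply x]
  refine congrArg _ (Prod.ext ?_ ?_)
  · show (-d.H1) (q.1 • ((eA A l) x).2 - KD0 l ((eA A l) x).1)
        + (q.1 • (d.H1 ((eA A l) x).2) - KD1 l ((-d.H0) ((eA A l) x).1)) = ((eA A l) x).1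
    simp only [LinearMap.neg_apply, map_neg]
    rw [map_sub, d.hHsmul1 q.1 _ h02]
    have hc := d.hcontr0 _ h01
    linear_combination (norm := module) hc
  · show d.H0 (q.2 • ((eA A l) x).1 + KD1 l ((eA A l) x).2)
        + (KD0 l (d.H1 ((eA A l) x).2) + q.2 • ((-d.H0) ((eA A l) x).1)) = ((eA A l) x).2
    simp only [LinearMap.neg_apply, map_neg]
    rw [map_add, smul_neg, d.hHsmul0 q.2 _ h01]
    have hc := d.hcontr1 _ h02
    linear_combination (norm := module) hc

private lemma cons_Hsmul0 : ∀ (a : A) x, cF R d.f0 d.f1 x = 0 →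
    cH R d.H0 (-d.H1) (a • x) = a • cH R d.H0 (-d.H1) x := by
  intro a x hx
  obtain ⟨h01, h02⟩ := cons_ker d x hx
  rw [cH_apply, cH_apply, map_smul, Prod.smul_fst, Prod.smul_snd]
  have e1 : (-d.H1) (a • ((eA A l) x).2) = a • ((-d.H1) ((eA A l) x).2) := by
    rw [LinearMap.neg_apply, LinearMap.neg_apply, d.hHsmul1 a _ h02, smul_neg]
  have e2 : d.H0 (a • ((eA A l) x).1) = a • (d.H0 ((eA A l) x).1) :=
    d.hHsmul0 a _ h01
  rw [e1, e2, ← map_smul ((eA A l).symm) a]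
  rfl

private lemma cons_Hsmul1 : ∀ (a : A) x, cF R d.f0 d.f1 x = 0 →
    cH R (-d.H0) d.H1 (a • x) = a • cH R (-d.H0) d.H1 x := by
  intro a x hx
  obtain ⟨h01, h02⟩ := cons_ker d x hx
  rw [cH_apply, cH_apply, map_smul, Prod.smul_fst, Prod.smul_snd]
  have e1 : d.H1 (a • ((eA A l) x).2) = a • (d.H1 ((eA A l) x).2) :=
    d.hHsmul1 a _ h02
  have e2 : (-d.H0) (a • ((eA A l) x).1) = a • ((-d.H0) ((eA A l) x).1) := by
    rw [LinearMap.neg_apply, LinearMap.neg_apply, d.hHsmul0 a _ h01, smul_neg]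
  rw [e1, e2, ← map_smul ((eA A l).symm) a]
  rfl

/-- Extension of exclusion data by one further Koszul factor. -/
noncomputable def ExclData.cons : ExclData R A Q (q :: l)
    ((algebraMap A Q q.1, algebraMap A Q q.2) :: l') where
  f0 := cF R d.f0 d.f1
  f1 := cF R d.f0 d.f1
  σ0 := cG R d.σ0 d.σ1
  σ1 := cG R d.σ0 d.σ1
  H0 := cH R d.H0 (-d.H1)
  H1 := cH R (-d.H0) d.H1
  hsemi0 := fun a x => cons_semi0 d a x
  hsemi1 := fun a x => cons_semi0 d a x
  hchain0 := fun x => cons_chain0 d q x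
  hchain1 := fun x => cons_chain1 d q x
  hsec0 := fun w => cons_sec0 d w
  hsec1 := fun z => cons_sec0 d z
  hfH0 := fun x => cons_fH0 d x
  hfH1 := fun x => cons_fH1 d x
  hcontr0 := fun x hx => cons_contr0 d q x hx
  hcontr1 := fun x hx => cons_contr1 d q x hx
  hHsmul0 := fun a x hx => cons_Hsmul0 d a x hx
  hHsmul1 := fun a x hx => cons_Hsmul1 d a x hx
end Cons

section Base
variable {R A Q : Type*} [CommRing R] [CommRing A] [CommRing Q]
  [Algebra R A] [Algebra R Q] [Algebra A Q] [IsScalarTower R A Q]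
variable (ai bi : A) (l2 : List (A × A)) (sL : Q →ₗ[R] A) (ρL : A →ₗ[R] A)

private abbrev bl' (l2 : List (A × A)) : List (Q × Q) :=
  l2.map (Prod.map (algebraMap A Q) (algebraMap A Q))

private lemma bcast1 : (kRank (bl' (Q := Q) l2)).1 = (kRank l2).1 :=
  congrArg Prod.fst (kRank_map _ l2)

private lemma bcast2 : (kRank (bl' (Q := Q) l2)).2 = (kRank l2).2 :=
  congrArg Prod.snd (kRank_map _ l2)

variable (R)

private noncomputable def bF0 :
    (Fin ((kRank l2).1 + (kRank l2).2) → A) →ₗ[R] (Fin (kRank (bl' (Q := Q) l2)).1 → Q) :=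
  ((LinearMap.funLeft R Q (Fin.cast (bcast1 l2)) ∘ₗ
      ((IsScalarTower.toAlgHom R A Q).toLinearMap.compLeft (Fin (kRank l2).1))) ∘ₗ
    LinearMap.fst R _ _) ∘ₗ ((eA A l2).toLinearMap.restrictScalars R)

private noncomputable def bF1 :
    (Fin ((kRank l2).1 + (kRank l2).2) → A) →ₗ[R] (Fin (kRank (bl' (Q := Q) l2)).2 → Q) :=
  ((LinearMap.funLeft R Q (Fin.cast (bcast2 l2)) ∘ₗ
      ((IsScalarTower.toAlgHom R A Q).toLinearMap.compLeft (Fin (kRank l2).2))) ∘ₗ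
    LinearMap.snd R _ _) ∘ₗ ((eA A l2).toLinearMap.restrictScalars R)

private noncomputable def bS0 :
    (Fin (kRank (bl' (Q := Q) l2)).1 → Q) →ₗ[R] (Fin ((kRank l2).1 + (kRank l2).2) → A) :=
  ((eA A l2).symm.toLinearMap.restrictScalars R) ∘ₗ
    (LinearMap.prod (sL.compLeft (Fin (kRank l2).1) ∘ₗ
      LinearMap.funLeft R Q (Fin.cast (bcast1 l2).symm)) 0)

private noncomputable def bS1 :
    (Fin (kRank (bl' (Q := Q) l2)).2 → Q) →ₗ[R] (Fin ((kRank l2).1 + (kRank l2).2) → A) :=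
  ((eA A l2).symm.toLinearMap.restrictScalars R) ∘ₗ
    (LinearMap.prod 0 (sL.compLeft (Fin (kRank l2).2) ∘ₗ
      LinearMap.funLeft R Q (Fin.cast (bcast2 l2).symm)))

private noncomputable def bH0 :
    (Fin ((kRank l2).1 + (kRank l2).2) → A) →ₗ[R] (Fin ((kRank l2).1 + (kRank l2).2) → A) :=
  (((eA A l2).symm.toLinearMap.restrictScalars R) ∘ₗ
    (LinearMap.prod (ρL.compLeft (Fin (kRank l2).1) ∘ₗ LinearMap.fst R _ _) 0)) ∘ₗ
    ((eA A l2).toLinearMap.restrictScalars R)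

private noncomputable def bH1 :
    (Fin ((kRank l2).1 + (kRank l2).2) → A) →ₗ[R] (Fin ((kRank l2).1 + (kRank l2).2) → A) :=
  (((eA A l2).symm.toLinearMap.restrictScalars R) ∘ₗ
    (LinearMap.prod 0 (ρL.compLeft (Fin (kRank l2).2) ∘ₗ LinearMap.snd R _ _))) ∘ₗ
    ((eA A l2).toLinearMap.restrictScalars R)

variable {R l2 sL ρL}

private lemma bF0_apply (x) : bF0 R l2 (Q := Q) x
    = fun i => algebraMap A Q (((eA A l2) x).1 (Fin.cast (bcast1 l2) i)) := rfl

private lemma bF1_apply (x) : bF1 R l2 (Q := Q) x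
    = fun j => algebraMap A Q (((eA A l2) x).2 (Fin.cast (bcast2 l2) j)) := rfl

private lemma bS0_apply (w) : bS0 R l2 sL w
    = (eA A l2).symm (fun i => sL (w (Fin.cast (bcast1 l2).symm i)), 0) := rfl

private lemma bS1_apply (z) : bS1 R l2 sL z
    = (eA A l2).symm (0, fun i => sL (z (Fin.cast (bcast2 l2).symm i))) := rfl

private lemma bH0_apply (x) : bH0 R l2 ρL x
    = (eA A l2).symm (fun i => ρL (((eA A l2) x).1 i), 0) := rfl

private lemma bH1_apply (x) : bH1 R l2 ρL x
    = (eA A l2).symm (0, fun i => ρL (((eA A l2) x).2 i)) := rfl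

variable (hs : ∀ w, algebraMap A Q (sL w) = w)
  (hρ : ∀ t, ρL (bi * t) = t)
  (hk : ∀ x : A, algebraMap A Q x = 0 → bi * ρL x = x)
  (hbi0 : algebraMap A Q bi = 0)

/-- The base case of the row-exclusion construction. -/
noncomputable def ExclData.base : ExclData R A Q ((ai, bi) :: l2) (bl' (Q := Q) l2) where
  f0 := bF0 R l2
  f1 := bF1 R l2
  σ0 := bS0 R l2 sL
  σ1 := bS1 R l2 sL
  H0 := bH0 R l2 ρL
  H1 := bH1 R l2 ρL
  hsemi0 := by
    intro a x
    have key : bF0 (Q := Q) R l2 (a • (x : Fin ((kRank l2).1 + (kRank l2).2) → A))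
        = algebraMap A Q a •
          bF0 (Q := Q) R l2 (x : Fin ((kRank l2).1 + (kRank l2).2) → A) := by
      erw [bF0_apply, bF0_apply, map_smul]
      funext i
      simp only [Prod.smul_fst, Pi.smul_apply, smul_eq_mul, map_mul]
    exact key
  hsemi1 := by
    intro a x
    have key : bF1 (Q := Q) R l2 (a • (x : Fin ((kRank l2).1 + (kRank l2).2) → A))
        = algebraMap A Q a •
          bF1 (Q := Q) R l2 (x : Fin ((kRank l2).1 + (kRank l2).2) → A) := by
      erw [bF1_apply, bF1_apply, map_smul]
      funext i
      simp only [Prod.smul_snd, Pi.smul_apply, smul_eq_mul, map_mul]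
    exact key
  hchain0 := by
    have hKD0m : ∀ y : Fin (kRank l2).1 → A,
        KD0 (bl' (Q := Q) l2)
            (fun i => algebraMap A Q (y (Fin.cast (bcast1 l2) i)))
          = fun j => algebraMap A Q (KD0 l2 y (Fin.cast (bcast2 l2) j)) :=
      (KD_map (algebraMap A Q) l2).1
    intro x
    have key : bF1 (Q := Q) R l2 (KD0c (ai, bi) l2 x)
        = KD0 (bl' (Q := Q) l2)
          (bF0 (Q := Q) R l2 (x : Fin ((kRank l2).1 + (kRank l2).2) → A)) := by
      erw [KD0c_cons, bF1_apply, LinearEquiv.apply_symm_apply, bF0_apply, hKD0m]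
      funext j
      simp only [Pi.add_apply, Pi.smul_apply, smul_eq_mul, map_add, map_mul, hbi0,
        zero_mul, add_zero]
    exact key
  hchain1 := by
    have hKD1m : ∀ y : Fin (kRank l2).2 → A,
        KD1 (bl' (Q := Q) l2)
            (fun i => algebraMap A Q (y (Fin.cast (bcast2 l2) i)))
          = fun j => algebraMap A Q (KD1 l2 y (Fin.cast (bcast1 l2) j)) :=
      (KD_map (algebraMap A Q) l2).2
    intro x
    have key : bF0 (Q := Q) R l2 (KD1c (ai, bi) l2 x)
        = KD1 (bl' (Q := Q) l2)
          (bF1 (Q := Q) R l2 (x : Fin ((kRank l2).1 + (kRank l2).2) → A)) := by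
      erw [KD1c_cons, bF0_apply, LinearEquiv.apply_symm_apply, bF1_apply, hKD1m]
      funext j
      simp only [Pi.add_apply, Pi.smul_apply, smul_eq_mul, map_add, map_mul, hbi0,
        zero_mul, zero_add]
    exact key
  hsec0 := by
    intro w
    have key : bF0 (Q := Q) R l2 (bS0 R l2 sL w) = w := by
      rw [bS0_apply, bF0_apply, LinearEquiv.apply_symm_apply]
      funext i
      exact hs (w i)
    exact key
  hsec1 := by
    intro z
    have key : bF1 (Q := Q) R l2 (bS1 R l2 sL z) = z := by
      rw [bS1_apply, bF1_apply, LinearEquiv.apply_symm_apply]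
      funext i
      exact hs (z i)
    exact key
  hfH0 := by
    intro x
    have key : bF1 (Q := Q) R l2
        (bH0 R l2 ρL (x : Fin ((kRank l2).1 + (kRank l2).2) → A)) = 0 := by
      erw [bH0_apply, bF1_apply, LinearEquiv.apply_symm_apply]
      funext j
      simp only [Pi.zero_apply, map_zero]
    exact key
  hfH1 := by
    intro x
    have key : bF0 (Q := Q) R l2
        (bH1 R l2 ρL (x : Fin ((kRank l2).1 + (kRank l2).2) → A)) = 0 := by
      erw [bH1_apply, bF0_apply, LinearEquiv.apply_symm_apply]
      funext j
      simp only [Pi.zero_apply, map_zero]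
    exact key
  hcontr0 := by
    intro x hx
    have hx2 : bF0 (Q := Q) R l2 (x : Fin ((kRank l2).1 + (kRank l2).2) → A) = 0 := hx
    have hx' : ∀ i0, algebraMap A Q (((eA A l2) x).1 i0) = 0 := by
      intro i0
      erw [bF0_apply] at hx2
      exact congrFun hx2 (Fin.cast (bcast1 l2).symm i0)
    have key : KD1c (ai, bi) l2
          (bH0 R l2 ρL (x : Fin ((kRank l2).1 + (kRank l2).2) → A))
        + bH1 R l2 ρL (KD0c (ai, bi) l2 x)
        = (x : Fin ((kRank l2).1 + (kRank l2).2) → A) := by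
      erw [KD1c_cons, KD0c_cons, bH0_apply, bH1_apply, LinearEquiv.apply_symm_apply,
        LinearEquiv.apply_symm_apply, ← map_add]
      conv_rhs => rw [← (eA A l2).symm_apply_apply x]
      refine congrArg _ (Prod.ext ?_ ?_)
      · show bi • (fun i => ρL (((eA A l2) x).1 i)) + KD1 l2 0 + 0 = ((eA A l2) x).1
        funext i
        simp only [map_zero, Pi.add_apply, Pi.zero_apply, add_zero, Pi.smul_apply,
          smul_eq_mul]
        exact hk _ (hx' i)
      · show ai • 0 - KD0 l2 (fun i => ρL (((eA A l2) x).1 i))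
            + (fun j => ρL ((KD0 l2 ((eA A l2) x).1 + bi • ((eA A l2) x).2) j))
            = ((eA A l2) x).2
        have hX1T : ((eA A l2) x).1 = bi • (fun i => ρL (((eA A l2) x).1 i)) :=
          funext fun i => (hk _ (hx' i)).symm
        have hKD : KD0 l2 ((eA A l2) x).1
            = bi • KD0 l2 (fun i => ρL (((eA A l2) x).1 i)) := by
          conv_lhs => rw [hX1T, map_smul]
        rw [hKD]
        funext j
        simp only [smul_zero, zero_sub, Pi.add_apply, Pi.neg_apply, Pi.smul_apply,
          smul_eq_mul]
        rw [← mul_add, hρ]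
        ring
    exact key
  hcontr1 := by
    intro x hx
    have hx2 : bF1 (Q := Q) R l2 (x : Fin ((kRank l2).1 + (kRank l2).2) → A) = 0 := hx
    have hx' : ∀ i0, algebraMap A Q (((eA A l2) x).2 i0) = 0 := by
      intro i0
      erw [bF1_apply] at hx2
      exact congrFun hx2 (Fin.cast (bcast2 l2).symm i0)
    have key : bH0 R l2 ρL (KD1c (ai, bi) l2 x)
        + KD0c (ai, bi) l2
          (bH1 R l2 ρL (x : Fin ((kRank l2).1 + (kRank l2).2) → A))
        = (x : Fin ((kRank l2).1 + (kRank l2).2) → A) := by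
      erw [KD1c_cons, KD0c_cons, bH0_apply, bH1_apply, LinearEquiv.apply_symm_apply,
        LinearEquiv.apply_symm_apply, ← map_add]
      conv_rhs => rw [← (eA A l2).symm_apply_apply x]
      refine congrArg _ (Prod.ext ?_ ?_)
      · show (fun j => ρL ((bi • ((eA A l2) x).1 + KD1 l2 ((eA A l2) x).2) j))
            + (ai • 0 - KD1 l2 (fun i => ρL (((eA A l2) x).2 i))) = ((eA A l2) x).1
        have hX2T : ((eA A l2) x).2 = bi • (fun i => ρL (((eA A l2) x).2 i)) :=
          funext fun i => (hk _ (hx' i)).symm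
        have hKD : KD1 l2 ((eA A l2) x).2
            = bi • KD1 l2 (fun i => ρL (((eA A l2) x).2 i)) := by
          conv_lhs => rw [hX2T, map_smul]
        rw [hKD]
        funext j
        simp only [smul_zero, zero_sub, Pi.add_apply, Pi.neg_apply, Pi.smul_apply,
          smul_eq_mul]
        rw [← mul_add, hρ]
        ring
      · show 0 + (KD0 l2 0 + bi • (fun i => ρL (((eA A l2) x).2 i))) = ((eA A l2) x).2
        funext i
        simp only [map_zero, Pi.add_apply, Pi.zero_apply, zero_add, Pi.smul_apply,
          smul_eq_mul]
        exact hk _ (hx' i)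
    exact key
  hHsmul0 := by
    intro a x hx
    have hx2 : bF0 (Q := Q) R l2 (x : Fin ((kRank l2).1 + (kRank l2).2) → A) = 0 := hx
    have hx' : ∀ i0, algebraMap A Q (((eA A l2) x).1 i0) = 0 := by
      intro i0
      erw [bF0_apply] at hx2
      exact congrFun hx2 (Fin.cast (bcast1 l2).symm i0)
    have key : bH0 R l2 ρL (a • (x : Fin ((kRank l2).1 + (kRank l2).2) → A))
        = a • bH0 R l2 ρL (x : Fin ((kRank l2).1 + (kRank l2).2) → A) := by
      erw [bH0_apply, bH0_apply, map_smul, ← map_smul ((eA A l2).symm) a]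
      refine congrArg _ (Prod.ext ?_ ?_)
      · show (fun i => ρL ((a • (eA A l2) x).1 i)) = a • fun i => ρL (((eA A l2) x).1 i)
        funext i
        simp only [Prod.smul_fst, Pi.smul_apply, smul_eq_mul]
        calc ρL (a * ((eA A l2) x).1 i)
            = ρL (a * (bi * ρL (((eA A l2) x).1 i))) := by rw [hk _ (hx' i)]
          _ = ρL (bi * (a * ρL (((eA A l2) x).1 i))) := by rw [mul_left_comm]
          _ = a * ρL (((eA A l2) x).1 i) := hρ _
      · show (0 : Fin (kRank l2).2 → A) = (a • ((0 : Fin (kRank l2).1 → A),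
            (0 : Fin (kRank l2).2 → A))).2
        rw [Prod.smul_snd, smul_zero]
    exact key
  hHsmul1 := by
    intro a x hx
    have hx2 : bF1 (Q := Q) R l2 (x : Fin ((kRank l2).1 + (kRank l2).2) → A) = 0 := hx
    have hx' : ∀ i0, algebraMap A Q (((eA A l2) x).2 i0) = 0 := by
      intro i0
      erw [bF1_apply] at hx2
      exact congrFun hx2 (Fin.cast (bcast2 l2).symm i0)
    have key : bH1 R l2 ρL (a • (x : Fin ((kRank l2).1 + (kRank l2).2) → A))
        = a • bH1 R l2 ρL (x : Fin ((kRank l2).1 + (kRank l2).2) → A) := by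
      erw [bH1_apply, bH1_apply, map_smul, ← map_smul ((eA A l2).symm) a]
      refine congrArg _ (Prod.ext ?_ ?_)
      · show (0 : Fin (kRank l2).1 → A) = (a • ((0 : Fin (kRank l2).1 → A),
            (0 : Fin (kRank l2).2 → A))).1
        rw [Prod.smul_fst, smul_zero]
      · show (fun i => ρL ((a • (eA A l2) x).2 i)) = a • fun i => ρL (((eA A l2) x).2 i)
        funext i
        simp only [Prod.smul_snd, Pi.smul_apply, smul_eq_mul]
        calc ρL (a * ((eA A l2) x).2 i)
            = ρL (a * (bi * ρL (((eA A l2) x).2 i))) := by rw [hk _ (hx' i)]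
          _ = ρL (bi * (a * ρL (((eA A l2) x).2 i))) := by rw [mul_left_comm]
          _ = a * ρL (((eA A l2) x).2 i) := hρ _
    exact key
end Base

section BigData
variable {R A Q : Type*} [CommRing R] [CommRing A] [CommRing Q]
  [Algebra R A] [Algebra R Q] [Algebra A Q] [IsScalarTower R A Q]
variable (ai bi : A) (l2 : List (A × A)) (sL : Q →ₗ[R] A) (ρL : A →ₗ[R] A)
variable (hs : ∀ w, algebraMap A Q (sL w) = w)
  (hρ : ∀ t, ρL (bi * t) = t)
  (hk : ∀ x : A, algebraMap A Q x = 0 → bi * ρL x = x)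
  (hbi0 : algebraMap A Q bi = 0)

/-- The full exclusion data for a Koszul factorization with distinguished factor
`(ai, bi)`, built by induction on the preceding factors. -/
noncomputable def bigData : (l1 : List (A × A)) →
    ExclData R A Q (l1 ++ (ai, bi) :: l2)
      ((l1 ++ l2).map (Prod.map (algebraMap A Q) (algebraMap A Q)))
  | [] => ExclData.base ai bi (l2 := l2) (sL := sL) (ρL := ρL) hs hρ hk hbi0
  | q :: t => (bigData t).cons q
end BigData

section Division
open Polynomial
variable {R : Type*} [CommRing R] [IsDomain R]

/-- Division with remainder by `bi` (monic up to the unit `c'`), packaged as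
`R`-linear maps: a section of the quotient projection and division by `bi`. -/
lemma division_package (m : ℕ) (c' u : R) (huc : u * c' = 1)
    (bi pp : Polynomial R) (hbi : bi = Polynomial.C c' * Polynomial.X ^ m + pp)
    (hdeg : pp.degree < m) :
    ∃ (sL : (Polynomial R ⧸ Ideal.span {bi}) →ₗ[R] Polynomial R)
      (ρL : Polynomial R →ₗ[R] Polynomial R),
      (∀ w, algebraMap (Polynomial R) (Polynomial R ⧸ Ideal.span {bi}) (sL w) = w) ∧
      (∀ t, ρL (bi * t) = t) ∧
      (∀ x, algebraMap (Polynomial R) (Polynomial R ⧸ Ideal.span {bi}) x = 0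
        → bi * ρL x = x) := by
  set bh : Polynomial R := Polynomial.C u * bi with hbh
  have hbieq : Polynomial.C c' * bh = bi := by
    rw [hbh, ← mul_assoc, ← Polynomial.C_mul, mul_comm c' u, huc, Polynomial.C_1, one_mul]
  have hbh' : bh = Polynomial.X ^ m + Polynomial.C u * pp := by
    rw [hbh, hbi, mul_add, ← mul_assoc, ← Polynomial.C_mul, huc, Polynomial.C_1, one_mul]
  have hdeg' : (Polynomial.C u * pp).degree < (m : WithBot ℕ) := by
    refine lt_of_le_of_lt ?_ hdeg
    calc (Polynomial.C u * pp).degree ≤ (Polynomial.C u).degree + pp.degree :=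
          Polynomial.degree_mul_le _ _
      _ ≤ 0 + pp.degree := add_le_add_left Polynomial.degree_C_le _
      _ = pp.degree := zero_add _
  have hmonic : bh.Monic := by
    apply Polynomial.monic_of_natDegree_le_of_coeff_eq_one m
    · rw [Polynomial.natDegree_le_iff_degree_le, hbh']
      exact Polynomial.degree_add_le_of_degree_le
        (Polynomial.degree_X_pow_le m) (le_of_lt hdeg')
    · rw [hbh', Polynomial.coeff_add, Polynomial.coeff_X_pow, if_pos rfl,
        Polynomial.coeff_eq_zero_of_degree_lt hdeg', add_zero]
  have hbhne : bh ≠ 0 := hmonic.ne_zero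
  have hbhdvdbi : bh ∣ bi := ⟨Polynomial.C c', by rw [mul_comm]; exact hbieq.symm⟩
  have hbidvdbh : bi ∣ bh := ⟨Polynomial.C u, by rw [hbh, mul_comm]⟩
  have ediv : ∀ p : Polynomial R, bh * (p /ₘ bh) = p - p %ₘ bh := by
    intro p
    rw [eq_sub_iff_add_eq, add_comm]
    exact Polynomial.modByMonic_add_div p bh
  set dv : Polynomial R →ₗ[R] Polynomial R :=
    { toFun := fun t => t /ₘ bh
      map_add' := by
        intro x y
        apply mul_left_cancel₀ hbhne
        rw [mul_add, ediv, ediv, ediv, Polynomial.add_modByMonic]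
        ring
      map_smul' := by
        intro r x
        apply mul_left_cancel₀ hbhne
        rw [RingHom.id_apply, mul_smul_comm, ediv, ediv, Polynomial.smul_modByMonic,
          smul_sub] } with hdv
  have hdv_apply : ∀ t, dv t = t /ₘ bh := fun t => rfl
  set ρL : Polynomial R →ₗ[R] Polynomial R := u • dv with hρL
  have hρ : ∀ t, ρL (bi * t) = t := by
    intro t
    have h1 : bi * t = bh * (Polynomial.C c' * t) := by rw [← hbieq]; ring
    have h2 : ρL (bi * t) = u • ((bi * t) /ₘ bh) := rfl
    rw [h2, h1, Polynomial.mul_divByMonic_cancel_left _ hmonic, Polynomial.smul_eq_C_mul,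
      ← mul_assoc, ← Polynomial.C_mul, huc, Polynomial.C_1, one_mul]
  -- the section
  set eL : Polynomial R →ₗ[R] Polynomial R := Polynomial.modByMonicHom bh with heL
  have hle : (Ideal.span {bi}).restrictScalars R ≤ LinearMap.ker eL := by
    intro x hx
    have hx' : bi ∣ x := Ideal.mem_span_singleton.mp hx
    have hx'' : bh ∣ x := dvd_trans hbhdvdbi hx'
    have : x %ₘ bh = 0 := (Polynomial.modByMonic_eq_zero_iff_dvd hmonic).mpr hx''
    exact this
  refine ⟨(Submodule.liftQ _ eL hle) ∘ₗ
      ((Submodule.Quotient.restrictScalarsEquiv R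
        ((Ideal.span {bi}))).symm.toLinearMap), ρL, ?_, hρ, ?_⟩
  · intro w
    obtain ⟨a, rfl⟩ := Ideal.Quotient.mk_surjective w
    have h1 : (Submodule.Quotient.restrictScalarsEquiv R
        ((Ideal.span {bi}) : Ideal (Polynomial R))).symm (Ideal.Quotient.mk _ a)
        = Submodule.Quotient.mk a := by
      rw [LinearEquiv.symm_apply_eq, Submodule.Quotient.restrictScalarsEquiv_mk]
      rfl
    have h2 : ((Submodule.liftQ _ eL hle) ∘ₗ
        ((Submodule.Quotient.restrictScalarsEquiv R
          ((Ideal.span {bi}))).symm.toLinearMap)) (Ideal.Quotient.mk _ a)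
        = a %ₘ bh := by
      rw [LinearMap.comp_apply, LinearEquiv.coe_coe, h1, Submodule.liftQ_apply]
      rfl
    rw [h2, Ideal.Quotient.algebraMap_eq, Ideal.Quotient.eq]
    have : a %ₘ bh - a = -(bh * (a /ₘ bh)) := by
      rw [ediv]; ring
    rw [this]
    exact Ideal.mem_span_singleton.mpr ((dvd_neg).mpr (Dvd.dvd.mul_right hbidvdbh _))
  · intro x hx
    rw [Ideal.Quotient.algebraMap_eq, Ideal.Quotient.eq_zero_iff_mem,
      Ideal.mem_span_singleton] at hx
    obtain ⟨t, rfl⟩ := hx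
    rw [hρ t]
end Division

/-- Restriction of scalars along an algebra, avoiding instance-search issues. -/
noncomputable def restrictAlg (R : Type*) {A : Type*} [CommRing R] [CommRing A] [Algebra R A]
    {M N : Type*} [AddCommGroup M] [AddCommGroup N] [Module A M] [Module A N]
    [Module R M] [Module R N] [IsScalarTower R A M] [IsScalarTower R A N]
    (f : M →ₗ[A] N) : M →ₗ[R] N where
  toFun := f
  map_add' := map_add f
  map_smul' := by
    intro r x
    show f (r • x) = r • f x
    rw [← algebraMap_smul A r x, map_smul, algebraMap_smul]

/-- row exclusion, Khovanov–Rozansky Theorem 2.2. -/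
theorem row_exclusion (n m : ℕ) (c : ℚ) (hc : c ≠ 0)
    (l1 l2 : List (Polynomial (MvPolynomial (Fin n) ℚ) × Polynomial (MvPolynomial (Fin n) ℚ)))
    (ai bi pp : Polynomial (MvPolynomial (Fin n) ℚ))
    (hbi : bi = Polynomial.C (algebraMap ℚ (MvPolynomial (Fin n) ℚ) c) * Polynomial.X ^ m + pp)
    (hdeg : pp.degree < m)
    (ω : MvPolynomial (Fin n) ℚ)
    (hω : (((l1 ++ (ai, bi) :: l2).map (fun q => q.1 * q.2)).sum = Polynomial.C ω)) :
    -- notation: L the full list over R_y, L' the reduced list over R_y/⟨bᵢ⟩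
    ∀ (L : List (Polynomial (MvPolynomial (Fin n) ℚ) × Polynomial (MvPolynomial (Fin n) ℚ)))
      (hL : L = l1 ++ (ai, bi) :: l2)
      (L' : List ((Polynomial (MvPolynomial (Fin n) ℚ) ⧸ Ideal.span {bi}) ×
                  (Polynomial (MvPolynomial (Fin n) ℚ) ⧸ Ideal.span {bi})))
      (hL' : L' = (l1 ++ l2).map (fun q =>
        (Ideal.Quotient.mk (Ideal.span {bi}) q.1, Ideal.Quotient.mk (Ideal.span {bi}) q.2))),
    -- homotopy equivalence over R = ℚ[x₁,…,xₙ] between K(a;b)_{R_y} and K(ǎ;b̌)_{R_y/⟨bᵢ⟩}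
    ∃ (f0 : (Fin (kRank L).1 → Polynomial (MvPolynomial (Fin n) ℚ)) →ₗ[MvPolynomial (Fin n) ℚ]
            (Fin (kRank L').1 → Polynomial (MvPolynomial (Fin n) ℚ) ⧸ Ideal.span {bi}))
      (f1 : (Fin (kRank L).2 → Polynomial (MvPolynomial (Fin n) ℚ)) →ₗ[MvPolynomial (Fin n) ℚ]
            (Fin (kRank L').2 → Polynomial (MvPolynomial (Fin n) ℚ) ⧸ Ideal.span {bi}))
      (g0 : (Fin (kRank L').1 → Polynomial (MvPolynomial (Fin n) ℚ) ⧸ Ideal.span {bi})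
              →ₗ[MvPolynomial (Fin n) ℚ]
            (Fin (kRank L).1 → Polynomial (MvPolynomial (Fin n) ℚ)))
      (g1 : (Fin (kRank L').2 → Polynomial (MvPolynomial (Fin n) ℚ) ⧸ Ideal.span {bi})
              →ₗ[MvPolynomial (Fin n) ℚ]
            (Fin (kRank L).2 → Polynomial (MvPolynomial (Fin n) ℚ)))
      (h0 : (Fin (kRank L).1 → Polynomial (MvPolynomial (Fin n) ℚ)) →ₗ[MvPolynomial (Fin n) ℚ]
            (Fin (kRank L).2 → Polynomial (MvPolynomial (Fin n) ℚ)))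
      (h1 : (Fin (kRank L).2 → Polynomial (MvPolynomial (Fin n) ℚ)) →ₗ[MvPolynomial (Fin n) ℚ]
            (Fin (kRank L).1 → Polynomial (MvPolynomial (Fin n) ℚ)))
      (k0 : (Fin (kRank L').1 → Polynomial (MvPolynomial (Fin n) ℚ) ⧸ Ideal.span {bi})
              →ₗ[MvPolynomial (Fin n) ℚ]
            (Fin (kRank L').2 → Polynomial (MvPolynomial (Fin n) ℚ) ⧸ Ideal.span {bi}))
      (k1 : (Fin (kRank L').2 → Polynomial (MvPolynomial (Fin n) ℚ) ⧸ Ideal.span {bi})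
              →ₗ[MvPolynomial (Fin n) ℚ]
            (Fin (kRank L').1 → Polynomial (MvPolynomial (Fin n) ℚ) ⧸ Ideal.span {bi})),
      -- f̄ = (f0, f1) is a morphism of matrix factorizations
      (∀ x, KD0 L' (f0 x) = f1 (KD0 L x)) ∧
      (∀ x, KD1 L' (f1 x) = f0 (KD1 L x)) ∧
      -- ḡ = (g0, g1) is a morphism of matrix factorizations
      (∀ x, KD0 L (g0 x) = g1 (KD0 L' x)) ∧
      (∀ x, KD1 L (g1 x) = g0 (KD1 L' x)) ∧
      -- ḡ∘f̄ is homotopic to the identity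
      (∀ x, g0 (f0 x) - x = h1 (KD0 L x) + KD1 L (h0 x)) ∧
      (∀ x, g1 (f1 x) - x = h0 (KD1 L x) + KD0 L (h1 x)) ∧
      -- f̄∘ḡ is homotopic to the identity
      (∀ x, f0 (g0 x) - x = k1 (KD0 L' x) + KD1 L' (k0 x)) ∧
      (∀ x, f1 (g1 x) - x = k0 (KD1 L' x) + KD0 L' (k1 x)) := by
  intro L hL L' hL'
  subst hL
  subst hL'
  classical
  have huc : (algebraMap ℚ (MvPolynomial (Fin n) ℚ) c⁻¹)
      * (algebraMap ℚ (MvPolynomial (Fin n) ℚ) c) = 1 := by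
    rw [← map_mul, inv_mul_cancel₀ hc, map_one]
  obtain ⟨sL, ρL, hs, hρ, hk⟩ :=
    division_package m (algebraMap ℚ (MvPolynomial (Fin n) ℚ) c)
      (algebraMap ℚ (MvPolynomial (Fin n) ℚ) c⁻¹) huc bi pp hbi hdeg
  have hbi0 : @algebraMap (Polynomial (MvPolynomial (Fin n) ℚ))
      (Polynomial (MvPolynomial (Fin n) ℚ) ⧸ Ideal.span {bi}) _ _ (Ideal.Quotient.algebra _) bi = 0 := by
    rw [Ideal.Quotient.algebraMap_eq, Ideal.Quotient.eq_zero_iff_mem]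
    exact Ideal.mem_span_singleton.mpr dvd_rfl
  set D := bigData ai bi l2 sL ρL hs hρ hk hbi0 l1 with hD
  set L := l1 ++ (ai, bi) :: l2 with hLdef
  set L'' := (l1 ++ l2).map
    (Prod.map (@algebraMap (Polynomial (MvPolynomial (Fin n) ℚ))
      (Polynomial (MvPolynomial (Fin n) ℚ) ⧸ Ideal.span {bi}) _ _ (Ideal.Quotient.algebra _))
     (@algebraMap (Polynomial (MvPolynomial (Fin n) ℚ))
      (Polynomial (MvPolynomial (Fin n) ℚ) ⧸ Ideal.span {bi}) _ _ (Ideal.Quotient.algebra _))) with hL2def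
  -- potentials
  have hDD0 : ∀ mm : Fin (kRank L).1 → Polynomial (MvPolynomial (Fin n) ℚ), KD1 L (KD0 L mm) = ω • mm := by
    intro mm
    rw [(KD_pot L).1 mm, hω, ← Polynomial.algebraMap_eq]
    exact algebraMap_smul (Polynomial (MvPolynomial (Fin n) ℚ)) ω mm
  have hDD1 : ∀ mm : Fin (kRank L).2 → Polynomial (MvPolynomial (Fin n) ℚ), KD0 L (KD1 L mm) = ω • mm := by
    intro mm
    rw [(KD_pot L).2 mm, hω, ← Polynomial.algebraMap_eq]
    exact algebraMap_smul (Polynomial (MvPolynomial (Fin n) ℚ)) ω mm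
  have hsum2 : ((l1 ++ l2).map (fun q : Polynomial (MvPolynomial (Fin n) ℚ) × Polynomial (MvPolynomial (Fin n) ℚ) => q.1 * q.2)).sum
      = Polynomial.C ω - ai * bi := by
    have h := hω
    rw [List.map_append, List.sum_append, List.map_cons, List.sum_cons] at h
    rw [List.map_append, List.sum_append]
    linear_combination h
  have hsumQ : (L''.map (fun q => q.1 * q.2)).sum
      = @algebraMap (MvPolynomial (Fin n) ℚ)
        (Polynomial (MvPolynomial (Fin n) ℚ) ⧸ Ideal.span {bi}) _ _ (Ideal.Quotient.algebra _) ω := by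
    rw [hL2def, List.map_map]
    rw [show ((fun q : (Polynomial (MvPolynomial (Fin n) ℚ) ⧸ Ideal.span {bi}) ×
            (Polynomial (MvPolynomial (Fin n) ℚ) ⧸ Ideal.span {bi}) => q.1 * q.2) ∘
          (Prod.map (@algebraMap (Polynomial (MvPolynomial (Fin n) ℚ))
              (Polynomial (MvPolynomial (Fin n) ℚ) ⧸ Ideal.span {bi}) _ _ (Ideal.Quotient.algebra _))
            (@algebraMap (Polynomial (MvPolynomial (Fin n) ℚ))
              (Polynomial (MvPolynomial (Fin n) ℚ) ⧸ Ideal.span {bi}) _ _ (Ideal.Quotient.algebra _))))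
        = (⇑(@algebraMap (Polynomial (MvPolynomial (Fin n) ℚ))
            (Polynomial (MvPolynomial (Fin n) ℚ) ⧸ Ideal.span {bi}) _ _ (Ideal.Quotient.algebra _))) ∘ (fun q : Polynomial (MvPolynomial (Fin n) ℚ) × Polynomial (MvPolynomial (Fin n) ℚ) => q.1 * q.2) from by
      funext q
      simp [Prod.map, map_mul]]
    have h0 : @algebraMap (Polynomial (MvPolynomial (Fin n) ℚ))
        (Polynomial (MvPolynomial (Fin n) ℚ) ⧸ Ideal.span {bi}) _ _ (Ideal.Quotient.algebra _) (ai * bi) = 0 := by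
      rw [Ideal.Quotient.algebraMap_eq, Ideal.Quotient.eq_zero_iff_mem]
      exact Ideal.mem_span_singleton.mpr (dvd_mul_left bi ai)
    rw [← List.map_map, ← map_list_sum, hsum2, map_sub, h0, sub_zero,
      ← Polynomial.algebraMap_eq, ← IsScalarTower.algebraMap_apply]
  have hdd0 : ∀ w : Fin (kRank L'').1 → Polynomial (MvPolynomial (Fin n) ℚ) ⧸ Ideal.span {bi}, KD1 L'' (KD0 L'' w) = ω • w := by
    intro w
    rw [(KD_pot L'').1 w, hsumQ]
    funext i
    simp only [Pi.smul_apply]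
    exact algebraMap_smul (Polynomial (MvPolynomial (Fin n) ℚ) ⧸ Ideal.span {bi}) ω (w i)
  have hdd1 : ∀ w : Fin (kRank L'').2 → Polynomial (MvPolynomial (Fin n) ℚ) ⧸ Ideal.span {bi}, KD0 L'' (KD1 L'' w) = ω • w := by
    intro w
    rw [(KD_pot L'').2 w, hsumQ]
    funext i
    simp only [Pi.smul_apply]
    exact algebraMap_smul (Polynomial (MvPolynomial (Fin n) ℚ) ⧸ Ideal.span {bi}) ω (w i)
  haveI iT1 : IsScalarTower (MvPolynomial (Fin n) ℚ)
      (Polynomial (MvPolynomial (Fin n) ℚ) ⧸ Ideal.span {bi})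
      (Fin (kRank L'').1 → Polynomial (MvPolynomial (Fin n) ℚ) ⧸ Ideal.span {bi}) :=
    Pi.isScalarTower
  haveI iT2 : IsScalarTower (MvPolynomial (Fin n) ℚ)
      (Polynomial (MvPolynomial (Fin n) ℚ) ⧸ Ideal.span {bi})
      (Fin (kRank L'').2 → Polynomial (MvPolynomial (Fin n) ℚ) ⧸ Ideal.span {bi}) :=
    Pi.isScalarTower
  obtain ⟨g0, g1, h0, h1, hg1, hg2, hg3, hg4, hg5, hg6⟩ :=
    abstract_exclusion (R := MvPolynomial (Fin n) ℚ) ω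
      (restrictAlg (MvPolynomial (Fin n) ℚ) (KD0 L))
      (restrictAlg (MvPolynomial (Fin n) ℚ) (KD1 L))
      (restrictAlg (MvPolynomial (Fin n) ℚ) (KD0 L''))
      (restrictAlg (MvPolynomial (Fin n) ℚ) (KD1 L''))
      D.f0 D.f1 D.σ0 D.σ1 D.H0 D.H1
      hDD0 hDD1 hdd0 hdd1
      (fun x => D.hchain0 x) (fun x => D.hchain1 x)
      (fun w => D.hsec0 w) (fun z => D.hsec1 z)
      (fun x => D.hfH0 x) (fun x => D.hfH1 x)
      (fun x hx => D.hcontr0 x hx) (fun x hx => D.hcontr1 x hx)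
  refine ⟨D.f0, D.f1, g0, g1, h0, h1, 0, 0,
    (fun x => (D.hchain0 x).symm), (fun x => (D.hchain1 x).symm),
    (fun x => hg1 x), (fun x => hg2 x),
    (fun x => hg3 x), (fun x => hg4 x), ?_, ?_⟩
  · intro x
    show D.f0 (g0 x) - (id x : Fin (kRank L'').1 →
          Polynomial (MvPolynomial (Fin n) ℚ) ⧸ Ideal.span {bi})
        = (0 : (Fin (kRank L'').2 →
              Polynomial (MvPolynomial (Fin n) ℚ) ⧸ Ideal.span {bi})
            →ₗ[MvPolynomial (Fin n) ℚ]
            (Fin (kRank L'').1 →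
              Polynomial (MvPolynomial (Fin n) ℚ) ⧸ Ideal.span {bi}))
          (KD0 L'' x)
        + KD1 L'' ((0 : (Fin (kRank L'').1 →
              Polynomial (MvPolynomial (Fin n) ℚ) ⧸ Ideal.span {bi})
            →ₗ[MvPolynomial (Fin n) ℚ]
            (Fin (kRank L'').2 →
              Polynomial (MvPolynomial (Fin n) ℚ) ⧸ Ideal.span {bi})) x)
    rw [hg5 x]
    simp only [id_eq, sub_self, LinearMap.zero_apply, map_zero, add_zero]
  · intro x
    show D.f1 (g1 x) - (id x : Fin (kRank L'').2 →
          Polynomial (MvPolynomial (Fin n) ℚ) ⧸ Ideal.span {bi})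
        = (0 : (Fin (kRank L'').1 →
              Polynomial (MvPolynomial (Fin n) ℚ) ⧸ Ideal.span {bi})
            →ₗ[MvPolynomial (Fin n) ℚ]
            (Fin (kRank L'').2 →
              Polynomial (MvPolynomial (Fin n) ℚ) ⧸ Ideal.span {bi}))
          (KD1 L'' x)
        + KD0 L'' ((0 : (Fin (kRank L'').2 →
              Polynomial (MvPolynomial (Fin n) ℚ) ⧸ Ideal.span {bi})
            →ₗ[MvPolynomial (Fin n) ℚ]
            (Fin (kRank L'').1 →
              Polynomial (MvPolynomial (Fin n) ℚ) ⧸ Ideal.span {bi})) x)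
    rw [hg6 x]
    simp only [id_eq, sub_self, LinearMap.zero_apply, map_zero, add_zero]
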